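/- arXiv:2102.07436 — 3 statements merged into one kernel-verified Lean document; each statement's English description precedes it below -/
import Mathlib

section
/- Let X be a type (the object space) and B a type (the parameter space), and let p : B → X → ℝ be a parametric binary probability model satisfying 0 < p(β, x) < 1 for all β and x. For an observation (x, c) with c ∈ {0, 1}, write P(C = c | x; β) = p(β, x) if c = 1 and P(C = c | x; β) = 1 − p(β, x) if c = 0. The binomial log-likelihood of a finite family E of pairs (x, c) is L(E; β) = Σ_{(x,c) ∈ E} log P(C = c | x; β), and the sample mean of conditional log-odds is μ(E; β) = (1/|E|) Σ_{(x,c) ∈ E} log( P(C = c | x; β) / (1 − P(C = c | x; β)) ). Let D = {(x_i, c_i) : i ∈ {1, …, n}} with n ≥ 1, let S ⊆ {1, …, n} be nonempty, and define D_S = {(x_i, 1 − c_i) : i ∈ S} (the pairs of D indexed by S with labels flipped) and D_S̄ = {(x_i, c_i) : i ∉ S}. Suppose β̂₁ ∈ B maximizes β ↦ L(D; β) over B and β̂₂ ∈ B maximizes β ↦ L(D_S ∪ D_S̄; β) over B. Then μ(D_S; β̂₂) ≥ μ(D_S; β̂₁). -/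
/-- `P(C = c | x; β)` for a parametric binary probability model `p`. -/
noncomputable def condProb {B X : Type*} (p : B → X → ℝ) (β : B) (x : X) (c : Bool) : ℝ :=
  if c then p β x else 1 - p β x

/-- Binomial log-likelihood of the indexed family of observations `(x i, c i)`. -/
noncomputable def logLik {B X : Type*} {n : ℕ} (p : B → X → ℝ)
    (x : Fin n → X) (c : Fin n → Bool) (β : B) : ℝ :=
  ∑ i : Fin n, Real.log (condProb p β (x i) (c i))

/-- Sample mean of conditional log-odds of the observations `(x i, c i)` for `i ∈ S`. -/
noncomputable def meanLogOdds {B X : Type*} {n : ℕ} (p : B → X → ℝ)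
    (x : Fin n → X) (c : Fin n → Bool) (S : Finset (Fin n)) (β : B) : ℝ :=
  (1 / (S.card : ℝ)) *
    ∑ i ∈ S, Real.log (condProb p β (x i) (c i) / (1 - condProb p β (x i) (c i)))

/-- Proposition 2: if `β₁` maximizes the log-likelihood of the data `D = (x i, c i)_{i<n}` and
`β₂` maximizes the log-likelihood of the data obtained from `D` by flipping the labels on the
nonempty index set `S`, then the sample mean of conditional log-odds of the flipped
observations `D_S = (x i, !c i)_{i ∈ S}` under `β₂` is at least that under `β₁`. -/
theorem stmt_1 {B X : Type*} (p : B → X → ℝ)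
    (hp : ∀ β x, 0 < p β x ∧ p β x < 1)
    (n : ℕ) (hn : 1 ≤ n) (x : Fin n → X) (c : Fin n → Bool)
    (S : Finset (Fin n)) (hS : S.Nonempty)
    (β₁ β₂ : B)
    (h₁ : ∀ β, logLik p x c β ≤ logLik p x c β₁)
    (h₂ : ∀ β, logLik p x (fun i => if i ∈ S then !(c i) else c i) β ≤
               logLik p x (fun i => if i ∈ S then !(c i) else c i) β₂) :
    meanLogOdds p x (fun i => !(c i)) S β₁ ≤ meanLogOdds p x (fun i => !(c i)) S β₂ := by
  have hcompl : ∀ β y (b : Bool), 1 - condProb p β y (!b) = condProb p β y b := by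
    intro β y b; cases b <;> simp [condProb] <;> ring
  have key : ∀ β, logLik p x (fun i => if i ∈ S then !(c i) else c i) β
      = logLik p x c β +
        ∑ i ∈ S, Real.log (condProb p β (x i) (!(c i)) / (1 - condProb p β (x i) (!(c i)))) := by
    intro β
    have hterm : ∀ i : Fin n,
        Real.log (condProb p β (x i) (if i ∈ S then !(c i) else c i))
        = Real.log (condProb p β (x i) (c i)) +
          (if i ∈ S then
            Real.log (condProb p β (x i) (!(c i)) / (1 - condProb p β (x i) (!(c i)))) else 0) := by
      intro i
      by_cases hi : i ∈ S
      · have hne : ∀ b : Bool, condProb p β (x i) b ≠ 0 := by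
          intro b; cases b <;> simp [condProb] <;> nlinarith [hp β (x i)]
        simp only [hi, if_true]
        rw [hcompl, Real.log_div (hne _) (hne _)]; ring
      · simp [hi]
    simp only [logLik, hterm, Finset.sum_add_distrib, Finset.sum_ite_mem,
      Finset.univ_inter]
  have hsum : ∑ i ∈ S, Real.log (condProb p β₁ (x i) (!(c i)) / (1 - condProb p β₁ (x i) (!(c i))))
      ≤ ∑ i ∈ S, Real.log (condProb p β₂ (x i) (!(c i)) / (1 - condProb p β₂ (x i) (!(c i)))) := by
    have a1 := h₁ β₂
    have a2 := h₂ β₁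
    rw [key β₁, key β₂] at a2
    linarith
  unfold meanLogOdds
  have hpos : (0:ℝ) < (S.card : ℝ) := by
    exact_mod_cast Finset.card_pos.mpr hS
  have : (0:ℝ) ≤ 1 / (S.card : ℝ) := by positivity
  exact mul_le_mul_of_nonneg_left hsum this
end

section
/- Let k ≥ 1, let A : {1, …, k} → ℝ be conformity scores on calibration examples, let u : {1, …, k} → ℝ be update values satisfying −1 ≤ u(i) ≤ 1 for all i, and let ε ∈ (0, 1]. For γ ≥ 0 define the adjusted scores A_γ(i) = A(i) + γ·u(i), and define t(γ) as the minimum of A_γ(i) over all indices i ∈ {1, …, k} satisfying #{ j ∈ {1, …, k} : A_γ(i) ≥ A_γ(j) } + 1 ≥ ε(k + 1) (this set of indices is nonempty since any index attaining the maximal score satisfies the condition when ε ≤ 1). Then for all γ ≥ 0, t(0) − γ ≤ t(γ) ≤ t(0) + γ. -/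
/-- The empirical `ε`-quantile threshold `t`: the minimum of `B i` over indices `i` whose
score rank satisfies `#{j : B j ≤ B i} + 1 ≥ ε (k + 1)`.  Since the set of such scores is
finite and (for `ε ≤ 1`) nonempty, its infimum is its minimum. -/
noncomputable def threshold {k : ℕ} (ε : ℝ) (B : Fin k → ℝ) : ℝ :=
  sInf {t : ℝ | ∃ i : Fin k,
    (((Finset.univ.filter (fun j : Fin k => B j ≤ B i)).card : ℝ) + 1 ≥ ε * (k + 1)) ∧
    B i = t}

def qset {k : ℕ} (ε : ℝ) (B : Fin k → ℝ) : Set ℝ :=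
  {t : ℝ | ∃ i : Fin k,
    (((Finset.univ.filter (fun j : Fin k => B j ≤ B i)).card : ℝ) + 1 ≥ ε * (k + 1)) ∧
    B i = t}

lemma qset_finite {k : ℕ} (ε : ℝ) (B : Fin k → ℝ) : (qset ε B).Finite := by
  apply (Set.finite_range B).subset
  rintro t ⟨i, _, rfl⟩
  exact ⟨i, rfl⟩

lemma qset_nonempty {k : ℕ} (hk : 1 ≤ k) (ε : ℝ) (hε1 : ε ≤ 1) (B : Fin k → ℝ) :
    (qset ε B).Nonempty := by
  haveI : Nonempty (Fin k) := ⟨⟨0, by omega⟩⟩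
  obtain ⟨i, _, hi⟩ := Finset.exists_max_image Finset.univ B Finset.univ_nonempty
  refine ⟨B i, i, ?_, rfl⟩
  have hfil : (Finset.univ.filter (fun j : Fin k => B j ≤ B i)) = Finset.univ := by
    apply Finset.filter_true_of_mem
    intro j hj
    exact hi j hj
  rw [hfil, Finset.card_univ, Fintype.card_fin]
  have hk1 : (0:ℝ) ≤ (k:ℝ) + 1 := by positivity
  nlinarith

lemma threshold_le {k : ℕ} (hk : 1 ≤ k) (ε : ℝ) (hε1 : ε ≤ 1) (γ : ℝ)
    (B B' : Fin k → ℝ) (h : ∀ j, B' j ≤ B j + γ) :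
    threshold ε B' ≤ threshold ε B + γ := by
  have hfin := qset_finite ε B
  have hne := qset_nonempty hk ε hε1 B
  have hmem : threshold ε B ∈ qset ε B := hne.csInf_mem hfin
  obtain ⟨i, hqi, hBi⟩ := hmem
  set T : Finset (Fin k) := Finset.univ.filter (fun j => B' j ≤ B i + γ) with hT
  have hiT : i ∈ T := by
    simp only [hT, Finset.mem_filter, Finset.mem_univ, true_and]
    exact h i
  obtain ⟨i', hi'T, hmax⟩ := T.exists_max_image B' ⟨i, hiT⟩
  have hsub : (Finset.univ.filter (fun j : Fin k => B j ≤ B i)) ⊆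
      (Finset.univ.filter (fun j : Fin k => B' j ≤ B' i')) := by
    intro j hj
    simp only [Finset.mem_filter, Finset.mem_univ, true_and] at hj ⊢
    have hjT : j ∈ T := by
      simp only [hT, Finset.mem_filter, Finset.mem_univ, true_and]
      linarith [h j]
    exact hmax j hjT
  have hcard : ((Finset.univ.filter (fun j : Fin k => B j ≤ B i)).card : ℝ) ≤
      ((Finset.univ.filter (fun j : Fin k => B' j ≤ B' i')).card : ℝ) := by
    exact_mod_cast Finset.card_le_card hsub
  have hqi' : (((Finset.univ.filter (fun j : Fin k => B' j ≤ B' i')).card : ℝ) + 1 ≥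
      ε * (k + 1)) := by linarith
  have hmem' : B' i' ∈ qset ε B' := ⟨i', hqi', rfl⟩
  have h1 : threshold ε B' ≤ B' i' :=
    csInf_le (qset_finite ε B').bddBelow hmem'
  have h2 : B' i' ≤ B i + γ := by
    have := hi'T
    simp only [hT, Finset.mem_filter, Finset.mem_univ, true_and] at this
    exact this
  have h3 : B' i' ≤ threshold ε B + γ := hBi ▸ h2
  linarith

/-- Proposition 3: for adjusted conformity scores `A_γ i = A i + γ * u i` with update values
`u i ∈ [-1, 1]`, the empirical `ε`-quantile threshold satisfies
`t(0) - γ ≤ t(γ) ≤ t(0) + γ` for all `γ ≥ 0`. -/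
theorem stmt_2 {k : ℕ} (hk : 1 ≤ k) (A u : Fin k → ℝ)
    (hu : ∀ i, -1 ≤ u i ∧ u i ≤ 1)
    (ε : ℝ) (hε : 0 < ε) (hε1 : ε ≤ 1)
    (γ : ℝ) (hγ : 0 ≤ γ) :
    threshold ε A - γ ≤ threshold ε (fun i => A i + γ * u i) ∧
    threshold ε (fun i => A i + γ * u i) ≤ threshold ε A + γ := by
  constructor
  · have := threshold_le hk ε hε1 γ (fun i => A i + γ * u i) A (fun j => by
      show A j ≤ A j + γ * u j + γ
      nlinarith [(hu j).1, mul_nonneg hγ (by linarith [(hu j).1] : (0:ℝ) ≤ u j + 1)])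
    linarith
  · exact threshold_le hk ε hε1 γ A (fun i => A i + γ * u i) (fun j => by
      show A j + γ * u j ≤ A j + γ
      nlinarith [(hu j).2, mul_nonneg hγ (by linarith [(hu j).2] : (0:ℝ) ≤ 1 - u j)])
end

section
/- Let k ≥ 1, ε ∈ (0, 1], δ ≥ 0, calibration conformity scores A : {1, …, k} → ℝ, and estimated conditional probabilities p : {1, …, k} → ℝ. Define the update values u(i) = +1 if p(i) < (1 − ε) − δ, u(i) = −1 if p(i) > (1 − ε) + δ, and u(i) = 0 otherwise. For γ ≥ 0 define A_γ(i) = A(i) + γ·u(i), define t(γ) as the minimum of A_γ(i) over all i ∈ {1, …, k} satisfying #{ j : A_γ(i) ≥ A_γ(j) } + 1 ≥ ε(k + 1), and define the correctness indicator c_i(γ) = 1 if A_γ(i) ≥ t(γ) and c_i(γ) = 0 otherwise. Then for every i ∈ {1, …, k} and every γ > 0: (i) if c_i(0) = 0 and p(i) > (1 − ε) + δ, then c_i(γ) = 0; and (ii) if c_i(0) = 1 and p(i) < (1 − ε) − δ, then c_i(γ) = 1. -/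
/-- The update values `U*`: `+1` if the estimated conditional probability is below
`(1-ε) - δ`, `-1` if it is above `(1-ε) + δ`, and `0` otherwise. -/
noncomputable def updateVal {k : ℕ} (ε δ : ℝ) (p : Fin k → ℝ) (i : Fin k) : ℝ :=
  if p i < (1 - ε) - δ then 1 else if p i > (1 - ε) + δ then -1 else 0

/-- The correctness indicator `c_i(γ)`: `1` if the adjusted score `A_γ i = A i + γ * u i`
is at least the threshold `t(γ)`, `0` otherwise. -/
noncomputable def correct {k : ℕ} (ε : ℝ) (A u : Fin k → ℝ) (γ : ℝ) (i : Fin k) : ℕ :=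
  if A i + γ * u i ≥ threshold ε (fun j => A j + γ * u j) then 1 else 0

/-- The threshold is attained at some index satisfying the rank condition, and it is a
lower bound for all scores of indices satisfying the rank condition. -/
lemma thr_spec {k : ℕ} (hk : 1 ≤ k) (ε : ℝ) (hε1 : ε ≤ 1) (B : Fin k → ℝ) :
    (∃ i : Fin k,
      (((Finset.univ.filter (fun j : Fin k => B j ≤ B i)).card : ℝ) + 1 ≥ ε * (k + 1)) ∧
      B i = threshold ε B) ∧
    ∀ i : Fin k,
      (((Finset.univ.filter (fun j : Fin k => B j ≤ B i)).card : ℝ) + 1 ≥ ε * (k + 1)) →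
      threshold ε B ≤ B i := by
  classical
  set S : Set ℝ := {t : ℝ | ∃ i : Fin k,
    (((Finset.univ.filter (fun j : Fin k => B j ≤ B i)).card : ℝ) + 1 ≥ ε * (k + 1)) ∧
    B i = t} with hS
  have hfin : S.Finite := (Set.finite_range B).subset (by rintro t ⟨i, _, rfl⟩; exact ⟨i, rfl⟩)
  have hne : S.Nonempty := by
    haveI : Nonempty (Fin k) := Fin.pos_iff_nonempty.mp (by omega)
    obtain ⟨i0, -, hi0⟩ := Finset.exists_max_image Finset.univ B Finset.univ_nonempty
    refine ⟨B i0, i0, ?_, rfl⟩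
    have hfil : (Finset.univ.filter (fun j : Fin k => B j ≤ B i0)) = Finset.univ := by
      apply Finset.eq_univ_iff_forall.mpr
      intro j
      simp only [Finset.mem_filter, Finset.mem_univ, true_and]
      exact hi0 j (Finset.mem_univ j)
    rw [hfil, Finset.card_univ, Fintype.card_fin]
    have hk1 : (0:ℝ) ≤ (k:ℝ) + 1 := by positivity
    nlinarith
  have hthr : threshold ε B = sInf S := rfl
  constructor
  · have := hne.csInf_mem hfin
    rw [← hthr] at this
    obtain ⟨i, hi, hiv⟩ := this
    exact ⟨i, hi, hiv⟩
  · intro i hi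
    rw [hthr]
    exact csInf_le hfin.bddBelow ⟨i, hi, rfl⟩

/-- Part (i), abstractly: if `u i = -1`, all update values are `-1` or nonnegative, and
`A i` is strictly below the threshold at `γ = 0`, then the adjusted score stays strictly
below the adjusted threshold. -/
lemma part1 {k : ℕ} (hk : 1 ≤ k) (ε : ℝ) (hε1 : ε ≤ 1) (A u : Fin k → ℝ)
    (γ : ℝ) (hγ : 0 < γ) (i : Fin k)
    (hcase : ∀ l, u l = -1 ∨ 0 ≤ u l) (hui : u i = -1)
    (h0 : A i < threshold ε A) :
    ¬ (threshold ε (fun j => A j + γ * u j) ≤ A i + γ * u i) := by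
  classical
  intro hge
  obtain ⟨⟨j0, hj0rank, hj0val⟩, hlbγ⟩ := thr_spec hk ε hε1 (fun j => A j + γ * u j)
  obtain ⟨-, hlb0⟩ := thr_spec hk ε hε1 A
  -- rank condition at 0 fails for i
  have hrank0 : ¬ ((((Finset.univ.filter (fun j : Fin k => A j ≤ A i)).card : ℝ) + 1
      ≥ ε * (k + 1))) := fun hc => absurd (hlb0 i hc) (not_le.mpr h0)
  -- the γ-rank filter of i is contained in the 0-rank filter of i
  have hsub : (Finset.univ.filter (fun j : Fin k => A j + γ * u j ≤ A i + γ * u i)) ⊆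
      (Finset.univ.filter (fun j : Fin k => A j ≤ A i)) := by
    intro l hl
    simp only [Finset.mem_filter, Finset.mem_univ, true_and] at hl ⊢
    rw [hui] at hl
    rcases hcase l with h1 | h1
    · rw [h1] at hl; linarith
    · have := mul_nonneg hγ.le h1; linarith
  -- hence rank condition at γ fails for i
  have hrankγ : ¬ ((((Finset.univ.filter
      (fun j : Fin k => A j + γ * u j ≤ A i + γ * u i)).card : ℝ) + 1 ≥ ε * (k + 1))) := by
    intro hc
    apply hrank0
    have hcard : ((Finset.univ.filter
        (fun j : Fin k => A j + γ * u j ≤ A i + γ * u i)).card : ℝ) ≤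
        ((Finset.univ.filter (fun j : Fin k => A j ≤ A i)).card : ℝ) :=
      Nat.cast_le.mpr (Finset.card_le_card hsub)
    linarith
  -- but j0 attains the threshold, with score ≤ the score of i
  have hle : A j0 + γ * u j0 ≤ A i + γ * u i := hj0val ▸ hge
  have hsub2 : (Finset.univ.filter (fun j : Fin k => A j + γ * u j ≤ A j0 + γ * u j0)) ⊆
      (Finset.univ.filter (fun j : Fin k => A j + γ * u j ≤ A i + γ * u i)) := by
    intro l hl
    simp only [Finset.mem_filter, Finset.mem_univ, true_and] at hl ⊢
    linarith
  apply hrankγ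
  have hcard2 : ((Finset.univ.filter
      (fun j : Fin k => A j + γ * u j ≤ A j0 + γ * u j0)).card : ℝ) ≤
      ((Finset.univ.filter (fun j : Fin k => A j + γ * u j ≤ A i + γ * u i)).card : ℝ) :=
    Nat.cast_le.mpr (Finset.card_le_card hsub2)
  linarith [hj0rank]

/-- Part (ii), abstractly: if `u i = 1`, all update values are at most `1`, and `A i` is at
least the threshold at `γ = 0`, then the adjusted score stays at least the adjusted
threshold. -/
lemma part2 {k : ℕ} (hk : 1 ≤ k) (ε : ℝ) (hε1 : ε ≤ 1) (A u : Fin k → ℝ)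
    (γ : ℝ) (hγ : 0 < γ) (i : Fin k)
    (hle1 : ∀ l, u l ≤ 1) (hui : u i = 1)
    (h0 : threshold ε A ≤ A i) :
    threshold ε (fun j => A j + γ * u j) ≤ A i + γ * u i := by
  classical
  obtain ⟨⟨i0, hi0rank, hi0val⟩, -⟩ := thr_spec hk ε hε1 A
  obtain ⟨-, hlbγ⟩ := thr_spec hk ε hε1 (fun j => A j + γ * u j)
  have hi0le : A i0 ≤ A i := hi0val ▸ h0
  have hsub : (Finset.univ.filter (fun j : Fin k => A j ≤ A i0)) ⊆
      (Finset.univ.filter (fun j : Fin k => A j + γ * u j ≤ A i + γ * u i)) := by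
    intro l hl
    simp only [Finset.mem_filter, Finset.mem_univ, true_and] at hl ⊢
    rw [hui]
    have := mul_le_mul_of_nonneg_left (hle1 l) hγ.le
    linarith
  have hcard : ((Finset.univ.filter (fun j : Fin k => A j ≤ A i0)).card : ℝ) ≤
      ((Finset.univ.filter (fun j : Fin k => A j + γ * u j ≤ A i + γ * u i)).card : ℝ) :=
    Nat.cast_le.mpr (Finset.card_le_card hsub)
  exact hlbγ i (by linarith [hi0rank])

/-- Theorem 1: with the `U*` update values, for every calibration index `i` and every `γ > 0`:
(i) if `c_i(0) = 0` and `p i > (1-ε) + δ` then `c_i(γ) = 0`;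
(ii) if `c_i(0) = 1` and `p i < (1-ε) - δ` then `c_i(γ) = 1`. -/
theorem stmt_4 {k : ℕ} (hk : 1 ≤ k)
    (ε : ℝ) (hε : 0 < ε) (hε1 : ε ≤ 1) (δ : ℝ) (hδ : 0 ≤ δ)
    (A p : Fin k → ℝ) :
    ∀ i : Fin k, ∀ γ : ℝ, 0 < γ →
      (correct ε A (updateVal ε δ p) 0 i = 0 → p i > (1 - ε) + δ →
        correct ε A (updateVal ε δ p) γ i = 0) ∧
      (correct ε A (updateVal ε δ p) 0 i = 1 → p i < (1 - ε) - δ →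
        correct ε A (updateVal ε δ p) γ i = 1) := by
  classical
  intro i γ hγ
  have hA0 : (fun j : Fin k => A j + (0:ℝ) * updateVal ε δ p j) = A := by
    funext j; ring
  have hcase : ∀ l, updateVal ε δ p l = -1 ∨ 0 ≤ updateVal ε δ p l := by
    intro l; unfold updateVal; split_ifs <;> norm_num
  have hle1 : ∀ l, updateVal ε δ p l ≤ 1 := by
    intro l; unfold updateVal; split_ifs <;> norm_num
  constructor
  · intro h0 hp
    have hui : updateVal ε δ p i = -1 := by
      unfold updateVal
      rw [if_neg (by linarith), if_pos hp]
    have h0' : A i < threshold ε A := by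
      unfold correct at h0
      rw [hA0] at h0
      by_contra hc
      rw [if_pos (by simpa using not_lt.mp hc)] at h0
      exact one_ne_zero h0
    unfold correct
    rw [if_neg (part1 hk ε hε1 A (updateVal ε δ p) γ hγ i hcase hui h0')]
  · intro h1 hp
    have hui : updateVal ε δ p i = 1 := by
      unfold updateVal
      rw [if_pos hp]
    have h1' : threshold ε A ≤ A i := by
      unfold correct at h1
      rw [hA0] at h1
      by_contra hc
      rw [if_neg (by simpa using not_le.mp hc)] at h1
      exact zero_ne_one h1
    unfold correct
    rw [if_pos (part2 hk ε hε1 A (updateVal ε δ p) γ hγ i hle1 hui h1')]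
end
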